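/- Let α > 0, μ > 0. Suppose g ∈ L¹_loc((0,τ)) is nonnegative, G(t) = ((α+1)∫₀ᵗ g)^(1/(α+1)), β ∈ ℝ, f continuous with f ≤ β·G on [0,τ), and x : [0,τ') → (0,∞) is a continuous solution of x(t) = μ + f(t) + ∫₀ᵗ g(s)/x(s)^α ds on [0, τ') with τ' ≤ τ. Then x(t) > f(t) + β₀^(−α)·G(t) for all t ∈ [0,τ'), where β₀ is the unique positive root of z^(α+1) − β·z^α − 1 = 0. -/

import Mathlib

/-!
Put `γ = β₀ ^ (-α)`, so that `γ = β₀ - β`, and `u = μ + h - γ G` with `h t = ∫₀ᵗ g / x ^ α`; the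
claim is `u > 0`. Formally `G' = g G ^ (-α)` because `G ^ (α + 1) = (α + 1) ∫₀ᵗ g`, and `f ≤ β G`
gives `x ≤ β₀ G + u`, hence `u' = g (x ^ (-α) - (β₀ G) ^ (-α)) ≥ -α (β₀ G) ^ (-α - 1) g u` while
`u ≥ 0`: `u` decays at most exponentially in `∫ g`, so it cannot reach `0`. As `g` is only
locally integrable, the differential inequality is replaced by increments over short intervals,
compared with an exponential barrier; the constant `α (β₀ G) ^ (-α - 1)` is finite only once
`∫ g > 0`, so the comparison is started just before the first zero of `u`.
-/

open MeasureTheory intervalIntegral Set Topology Filter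

theorem exists_first_zero {w : ℝ → ℝ} {a b : ℝ} (hab : a ≤ b) (hw : ContinuousOn w (Icc a b))
    (ha : 0 < w a) (hb : w b ≤ 0) : ∃ c ∈ Ioc a b, w c = 0 ∧ ∀ r ∈ Ico a c, 0 < w r := by
  set S := Icc a b ∩ w ⁻¹' Iic 0
  have hS : IsClosed S := hw.preimage_isClosed_of_isClosed isClosed_Icc isClosed_Iic
  have hSbdd : BddBelow S := ⟨a, fun r hr => hr.1.1⟩
  have hcS : sInf S ∈ S := hS.csInf_mem ⟨b, ⟨hab, le_rfl⟩, hb⟩ hSbdd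
  have hpos : ∀ r ∈ Ico a (sInf S), 0 < w r := fun r hr => by
    by_contra! hwr
    exact (csInf_le hSbdd ⟨⟨hr.1, hr.2.le.trans hcS.1.2⟩, hwr⟩).not_gt hr.2
  have hac : a < sInf S := hcS.1.1.lt_of_ne fun h => (h ▸ hcS.2 : w a ≤ 0).not_gt ha
  obtain ⟨z, hz, hwz⟩ := intermediate_value_Icc' hac.le (hw.mono (Icc_subset_Icc le_rfl hcS.1.2))
    ⟨hcS.2, ha.le⟩
  have hzc : z = sInf S := hz.2.eq_of_not_lt fun hzc => (hpos z ⟨hz.1, hzc⟩).ne' hwz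
  exact ⟨sInf S, ⟨hac, hcS.1.2⟩, hzc ▸ hwz, hpos⟩

theorem pos_of_forall_exists_sub_le_mul {u φ : ℝ → ℝ} {a b : ℝ} (hab : a ≤ b)
    (hu : ContinuousOn u (Icc a b)) (hφ : ContinuousOn φ (Icc a b)) (ha : 0 < u a)
    (hstep : ∀ c ∈ Ioc a b, 0 < u c → ∃ s ∈ Ico a c, u s - u c ≤ u c * (φ c - φ s)) :
    0 < u b := by
  by_contra! hb
  set D : ℝ → ℝ := fun r => u a / 2 * Real.exp (φ a - φ r)
  have hD : ∀ r, 0 < D r := fun r => by positivity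
  have hDc : ContinuousOn D (Icc a b) :=
    continuousOn_const.mul (Real.continuous_exp.comp_continuousOn (continuousOn_const.sub hφ))
  obtain ⟨c, hc, hwc, hw⟩ := exists_first_zero (w := u - D) hab (hu.sub hDc)
    (by simp [D]; linarith) (by simp only [Pi.sub_apply]; linarith [hD b])
  have huc : u c = D c := sub_eq_zero.mp hwc
  obtain ⟨s, hs, hsc⟩ := hstep c hc (huc ▸ hD c)
  -- `D` solves `D' = -D φ'`, and convexity of `exp` bounds its decrements from below accordingly
  have hDs : D c * (φ c - φ s) ≤ D s - D c := by
    have : D s = D c * Real.exp (φ c - φ s) := by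
      simp only [D, mul_assoc, ← Real.exp_add]; ring_nf
    rw [this]
    nlinarith [Real.add_one_le_exp (φ c - φ s), hD c]
  have := hw s hs
  simp only [Pi.sub_apply] at this
  rw [huc] at hsc
  linarith

theorem abs_rpow_sub_rpow_le {p a b : ℝ} (hp : p ≤ 1) (ha : 0 < a) (hab : a ≤ b) :
    |b ^ p - a ^ p| ≤ |p| * a ^ (p - 1) * (b - a) := by
  rcases hab.eq_or_lt with rfl | hab
  · simp
  obtain ⟨ξ, hξ, hslope⟩ := exists_hasDerivAt_eq_slope (fun y => y ^ p) (fun y => p * y ^ (p - 1))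
    hab (continuousOn_id.rpow_const fun y hy => Or.inl (ha.trans_le hy.1).ne')
    fun y hy => Real.hasDerivAt_rpow_const (Or.inl (ha.trans hy.1).ne')
  have hmvt : b ^ p - a ^ p = p * ξ ^ (p - 1) * (b - a) := by
    rw [hslope]; field_simp [(sub_pos.mpr hab).ne']
  rw [hmvt, abs_mul, abs_mul, abs_of_pos (Real.rpow_pos_of_pos (ha.trans hξ.1) _),
    abs_of_pos (sub_pos.mpr hab)]
  have hξa : ξ ^ (p - 1) ≤ a ^ (p - 1) := Real.rpow_le_rpow_of_nonpos ha hξ.1.le (by linarith)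
  gcongr

theorem rpow_neg_sub_rpow_neg_le {α m a b : ℝ} (hα : 0 ≤ α) (hm : 0 < m) (hma : m ≤ a)
    (hab : a ≤ b) : a ^ (-α) - b ^ (-α) ≤ α * m ^ (-α - 1) * (b - a) := by
  have h := abs_rpow_sub_rpow_le (p := -α) (by linarith) (hm.trans_le hma) hab
  rw [abs_neg, abs_of_nonneg hα, abs_sub_comm] at h
  have hma' : a ^ (-α - 1) ≤ m ^ (-α - 1) := Real.rpow_le_rpow_of_nonpos hm hma (by linarith)
  calc a ^ (-α) - b ^ (-α) ≤ α * a ^ (-α - 1) * (b - a) := (le_abs_self _).trans h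
    _ ≤ α * m ^ (-α - 1) * (b - a) := by gcongr

theorem mul_rpow_one_div_sub_le {α a b : ℝ} (hα : 0 ≤ α) (ha : 0 < a) (hab : a ≤ b) :
    ((α + 1) * b) ^ (1 / (α + 1)) - ((α + 1) * a) ^ (1 / (α + 1)) ≤
      (b - a) * (((α + 1) * a) ^ (1 / (α + 1))) ^ (-α) := by
  have hα1 : 0 < α + 1 := by linarith
  have h := abs_rpow_sub_rpow_le (p := 1 / (α + 1)) (div_le_one_of_le₀ (by linarith) hα1.le)
    (mul_pos hα1 ha) (mul_le_mul_of_nonneg_left hab hα1.le)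
  rw [abs_of_pos (by positivity : (0 : ℝ) < 1 / (α + 1))] at h
  refine (le_abs_self _).trans (h.trans_eq ?_)
  rw [← Real.rpow_mul (by positivity)]
  field_simp
  ring_nf

theorem sub_eq_rpow_neg_of_root {α β β₀ : ℝ} (hβ₀ : 0 < β₀)
    (h : β₀ ^ (α + 1) - β * β₀ ^ α - 1 = 0) : β₀ - β = β₀ ^ (-α) := by
  rw [Real.rpow_neg hβ₀.le]
  refine eq_inv_of_mul_eq_one_left ?_
  rw [Real.rpow_add_one hβ₀.ne'] at h
  linear_combination h

theorem monotoneOn_primitive {g : ℝ → ℝ} {a b : ℝ}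
    (hg : ∀ r ∈ Icc a b, IntervalIntegrable g volume a r) (hnn : ∀ᵐ r, r ∈ Ioc a b → 0 ≤ g r) :
    MonotoneOn (fun r => ∫ s in a..r, g s) (Icc a b) := fun r hr s hs hrs => by
  rw [← sub_nonneg, integral_interval_sub_left (hg s hs) (hg r hr), integral_of_le hrs]
  refine setIntegral_nonneg_of_ae_restrict ((ae_restrict_iff' measurableSet_Ioc).mpr ?_)
  exact hnn.mono fun q hq hqrs => hq ⟨hr.1.trans_lt hqrs.1, hqrs.2.trans hs.2⟩

theorem sub_mul_rpow_neg_le_sub_integral_div_rpow {g x : ℝ → ℝ} {a s c α B : ℝ} (hα : 0 ≤ α)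
    (hsc : s ≤ c) (hgs : IntervalIntegrable g volume a s) (hgc : IntervalIntegrable g volume a c)
    (hqs : IntervalIntegrable (fun r => g r / x r ^ α) volume a s)
    (hqc : IntervalIntegrable (fun r => g r / x r ^ α) volume a c)
    (hnn : ∀ᵐ r, r ∈ Ioc s c → 0 ≤ g r) (hx : ∀ r ∈ Ioc s c, 0 < x r ∧ x r ≤ B) :
    ((∫ r in a..c, g r) - ∫ r in a..s, g r) * B ^ (-α) ≤
      (∫ r in a..c, g r / x r ^ α) - ∫ r in a..s, g r / x r ^ α := by
  rw [integral_interval_sub_left hgc hgs, integral_interval_sub_left hqc hqs, mul_comm,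
    ← intervalIntegral.integral_const_mul, integral_of_le hsc, integral_of_le hsc]
  refine setIntegral_mono_ae_restrict ((hgs.symm.trans hgc).1.const_mul _) (hqs.symm.trans hqc).1 ?_
  refine (ae_restrict_iff' measurableSet_Ioc).mpr (hnn.mono fun r hr hrsc => ?_)
  obtain ⟨hx0, hxB⟩ := hx r hrsc
  dsimp only
  rw [Real.rpow_neg (hx0.le.trans hxB), div_eq_inv_mul]
  exact mul_le_mul_of_nonneg_right
    (inv_anti₀ (Real.rpow_pos_of_pos hx0 α) (Real.rpow_le_rpow hx0.le hxB hα)) (hr hrsc)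

theorem exists_sub_le_mul_of_pos {α β₀ t₁ c : ℝ} {I G u : ℝ → ℝ} (hα : 0 < α) (hβ₀ : 0 < β₀)
    (ht₁c : t₁ < c) (hG₁ : 0 < G t₁) (hGm : MonotoneOn G (Icc t₁ c))
    (hIm : MonotoneOn I (Icc t₁ c)) (hGc : ContinuousWithinAt G (Icc t₁ c) c)
    (huc : ContinuousWithinAt u (Icc t₁ c) c)
    (hconc : ∀ s ∈ Icc t₁ c, G c - G s ≤ (I c - I s) * G s ^ (-α))
    (hincr : ∀ s ∈ Icc t₁ c, ∀ B > 0, (∀ r ∈ Icc s c, β₀ * G r + u r ≤ B) →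
      (I c - I s) * B ^ (-α) - β₀ ^ (-α) * (G c - G s) ≤ u c - u s)
    (hpos : 0 < u c) :
    ∃ s ∈ Ico t₁ c, u s - u c ≤ u c * (2 * α * (β₀ * G t₁) ^ (-α - 1) * (I c - I s)) := by
  -- chosen so that `B - β₀ * G s ≤ (β₀ + 1) * ε + u c = 2 * u c` for the bound `B` below
  set ε := u c / (β₀ + 1)
  have hε : (β₀ + 1) * ε = u c := mul_div_cancel₀ _ (by positivity)
  have hε0 : 0 < ε := by positivity
  have hnear : ∀ᶠ r in 𝓝[Icc t₁ c] c, G c - ε < G r ∧ u r < u c + ε :=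
    (hGc.eventually_const_lt (by linarith)).and (huc.eventually_lt_const (by linarith))
  obtain ⟨l, hl, hlc⟩ := ((TFAE_mem_nhdsLE ht₁c _).out 1 3).mp hnear
  obtain ⟨s, hls, hsc⟩ := exists_between hl.2
  have hs : s ∈ Icc t₁ c := ⟨hl.1.trans hls.le, hsc.le⟩
  have hIcs : Icc s c ⊆ Ioc l c := fun r hr => ⟨hls.trans_le hr.1, hr.2⟩
  have hc : c ∈ Icc t₁ c := ⟨ht₁c.le, le_rfl⟩
  have hGs : G t₁ ≤ G s := hGm ⟨le_rfl, ht₁c.le⟩ hs hs.1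
  have hGsc : G s ≤ G c := hGm hs hc hsc.le
  have hΔI : 0 ≤ I c - I s := sub_nonneg.mpr (hIm hs hc hsc.le)
  have hΔG : G c - G s < ε := by linarith [(hlc (hIcs ⟨le_rfl, hsc.le⟩)).1]
  set B := β₀ * G c + u c + ε
  have hB : ∀ r ∈ Icc s c, β₀ * G r + u r ≤ B := fun r hr => by
    have hr' : r ∈ Icc t₁ c := ⟨hs.1.trans hr.1, hr.2⟩
    have := mul_le_mul_of_nonneg_left (hGm hr' hc hr.2) hβ₀.le
    linarith [(hlc (hIcs hr)).2]
  have hGsB : β₀ * G s ≤ B := by nlinarith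
  have hlip := rpow_neg_sub_rpow_neg_le hα.le (mul_pos hβ₀ hG₁)
    (mul_le_mul_of_nonneg_left hGs hβ₀.le) hGsB
  rw [Real.mul_rpow hβ₀.le (hG₁.trans_le hGs).le] at hlip
  refine ⟨s, ⟨hs.1, hsc⟩, ?_⟩
  have hstep := hincr s hs B (by nlinarith) hB
  have hconc' := mul_le_mul_of_nonneg_left (hconc s hs) (by positivity : (0 : ℝ) ≤ β₀ ^ (-α))
  calc u s - u c ≤ (I c - I s) * (β₀ ^ (-α) * G s ^ (-α) - B ^ (-α)) := by nlinarith
    _ ≤ (I c - I s) * (α * (β₀ * G t₁) ^ (-α - 1) * (B - β₀ * G s)) := by gcongr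
    _ ≤ (I c - I s) * (α * (β₀ * G t₁) ^ (-α - 1) * (2 * u c)) := by gcongr; nlinarith
    _ = _ := by ring

theorem pos_of_pos_of_increment_ge {α β₀ a b : ℝ} {I G u : ℝ → ℝ} (hα : 0 < α) (hβ₀ : 0 < β₀)
    (hab : a ≤ b) (hIc : ContinuousOn I (Icc a b)) (hIm : MonotoneOn I (Icc a b)) (hIa : 0 < I a)
    (hG : ∀ r ∈ Icc a b, G r = ((α + 1) * I r) ^ (1 / (α + 1)))
    (huc : ContinuousOn u (Icc a b)) (hua : 0 < u a)
    (hincr : ∀ s ∈ Icc a b, ∀ c ∈ Icc s b, ∀ B > 0, (∀ r ∈ Icc s c, β₀ * G r + u r ≤ B) →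
      (I c - I s) * B ^ (-α) - β₀ ^ (-α) * (G c - G s) ≤ u c - u s) :
    0 < u b := by
  have hGc : ContinuousOn G (Icc a b) :=
    ((continuousOn_const.mul hIc).rpow_const fun _ _ => Or.inr (by positivity)).congr hG
  have hIpos : ∀ r ∈ Icc a b, 0 < I r := fun r hr => hIa.trans_le (hIm ⟨le_rfl, hab⟩ hr hr.1)
  have hGm : MonotoneOn G (Icc a b) := fun r hr s hs hrs => by
    rw [hG r hr, hG s hs]
    have := hIpos r hr
    gcongr
    exact hIm hr hs hrs
  refine pos_of_forall_exists_sub_le_mul (φ := fun r => 2 * α * (β₀ * G a) ^ (-α - 1) * I r) hab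
    huc (continuousOn_const.mul hIc) hua fun c hc huc_pos => ?_
  have hsub : Icc a c ⊆ Icc a b := Icc_subset_Icc le_rfl hc.2
  have hcab : c ∈ Icc a b := ⟨hc.1.le, hc.2⟩
  simp only [← mul_sub]
  refine exists_sub_le_mul_of_pos hα hβ₀ hc.1 (by rw [hG a ⟨le_rfl, hab⟩]; positivity)
    (hGm.mono hsub) (hIm.mono hsub) ((hGc c hcab).mono hsub) ((huc c hcab).mono hsub)
    (fun s hs => ?_) (fun s hs => hincr s (hsub hs) c ⟨hs.2, hc.2⟩) huc_pos
  rw [hG c hcab, hG s (hsub hs)]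
  exact mul_rpow_one_div_sub_le hα.le (hIpos s (hsub hs)) (hIm (hsub hs) hcab hs.2)

theorem rpow_neg_mul_lt_add_of_increment_ge {α μ β₀ t : ℝ} {I h x G : ℝ → ℝ} (hα : 0 < α)
    (hμ : 0 < μ) (hβ₀ : 0 < β₀) (ht : 0 ≤ t) (hIc : ContinuousOn I (Icc 0 t))
    (hIm : MonotoneOn I (Icc 0 t)) (hI0 : I 0 = 0)
    (hG : ∀ r ∈ Icc 0 t, G r = ((α + 1) * I r) ^ (1 / (α + 1)))
    (hhc : ContinuousOn h (Icc 0 t)) (hh : ∀ r ∈ Icc 0 t, 0 ≤ h r)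
    (hx : ∀ r ∈ Icc 0 t, x r ≤ μ + (β₀ - β₀ ^ (-α)) * G r + h r)
    (hincr : ∀ s ∈ Icc 0 t, ∀ c ∈ Icc s t, ∀ B > 0, (∀ r ∈ Icc s c, x r ≤ B) →
      (I c - I s) * B ^ (-α) ≤ h c - h s) :
    β₀ ^ (-α) * G t < μ + h t := by
  set u : ℝ → ℝ := fun r => μ + h r - β₀ ^ (-α) * G r
  have hGc : ContinuousOn G (Icc 0 t) :=
    ((continuousOn_const.mul hIc).rpow_const fun _ _ => Or.inr (by positivity)).congr hG
  have huc : ContinuousOn u (Icc 0 t) :=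
    (continuousOn_const.add hhc).sub (continuousOn_const.mul hGc)
  have hG0 : ∀ r ∈ Icc 0 t, I r = 0 → G r = 0 := fun r hr hIr => by
    rw [hG r hr, hIr, mul_zero, Real.zero_rpow (by positivity)]
  have hu_of_I : ∀ r ∈ Icc 0 t, I r = 0 → 0 < u r := fun r hr hIr => by
    simp only [u, hG0 r hr hIr]; linarith [hh r hr]
  by_contra! hcon
  obtain ⟨t₀, ht₀, hut₀, hupos⟩ := exists_first_zero ht huc
    (hu_of_I 0 ⟨le_rfl, ht⟩ hI0) (by simp only [u]; linarith)
  have hsub₀ : Icc 0 t₀ ⊆ Icc 0 t := Icc_subset_Icc le_rfl ht₀.2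
  have hIt₀ : 0 < I t₀ := by
    refine (hI0 ▸ hIm ⟨le_rfl, ht⟩ (hsub₀ ⟨ht₀.1.le, le_rfl⟩) ht₀.1.le).lt_of_ne fun h0 => ?_
    exact (hu_of_I t₀ (hsub₀ ⟨ht₀.1.le, le_rfl⟩) h0.symm).ne' hut₀
  obtain ⟨l, hl, hlt₀⟩ := ((TFAE_mem_nhdsLE ht₀.1 _).out 1 3).mp
    (((hIc.mono hsub₀) t₀ ⟨ht₀.1.le, le_rfl⟩).eventually_const_lt hIt₀)
  obtain ⟨t₁, hlt₁, ht₁t₀⟩ := exists_between hl.2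
  have hsub₁ : Icc t₁ t₀ ⊆ Icc 0 t := Icc_subset_Icc (hl.1.trans hlt₁.le) ht₀.2
  refine hut₀.not_gt (pos_of_pos_of_increment_ge hα hβ₀ ht₁t₀.le (hIc.mono hsub₁) (hIm.mono hsub₁)
    (hlt₀ ⟨hlt₁, ht₁t₀.le⟩) (fun r hr => hG r (hsub₁ hr)) (huc.mono hsub₁)
    (hupos t₁ ⟨hl.1.trans hlt₁.le, ht₁t₀⟩) fun s hs c hc B hB hxB => ?_)
  have := hincr s (hsub₁ hs) c ⟨hc.1, hc.2.trans ht₀.2⟩ B hB fun r hr => by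
    have hr' : r ∈ Icc 0 t := hsub₁ ⟨hs.1.trans hr.1, hr.2.trans hc.2⟩
    linarith [hx r hr', hxB r hr]
  simp only [u]
  linarith

theorem stmt_18_general (α μ τ τ' β β₀ : ℝ) (hα : 0 < α) (hμ : 0 < μ)
    (hττ' : τ' ≤ τ)
    (g f x G : ℝ → ℝ)
    (hgnn : ∀ᵐ s ∂(volume : Measure ℝ), s ∈ Set.Ioo 0 τ → 0 ≤ g s)
    (hgint : ∀ t ∈ Set.Ico (0:ℝ) τ, IntervalIntegrable g volume 0 t)
    (hG : ∀ t ∈ Set.Ico (0:ℝ) τ,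
      G t = ((α + 1) * ∫ s in (0:ℝ)..t, g s) ^ (1 / (α + 1)))
    (hfb : ∀ t ∈ Set.Ico (0:ℝ) τ, f t ≤ β * G t)
    (hxpos : ∀ t ∈ Set.Ico (0:ℝ) τ', 0 < x t)
    (hint : ∀ t ∈ Set.Ico (0:ℝ) τ',
      IntervalIntegrable (fun s => g s / x s ^ α) volume 0 t)
    (heq : ∀ t ∈ Set.Ico (0:ℝ) τ',
      x t = μ + f t + ∫ s in (0:ℝ)..t, g s / x s ^ α)
    (hβ₀ : 0 < β₀ ∧ β₀ ^ (α + 1) - β * β₀ ^ α - 1 = 0) :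
    ∀ t ∈ Set.Ico (0:ℝ) τ', f t + β₀ ^ (-α) * G t < x t := by
  rintro t ⟨ht, htτ'⟩
  have hsub : Icc 0 t ⊆ Ico 0 τ' := Icc_subset_Ico_right htτ'
  have hsubτ : Icc 0 t ⊆ Ico 0 τ := hsub.trans (Ico_subset_Ico_right hττ')
  have hg : ∀ᵐ r, r ∈ Ioc 0 t → 0 ≤ g r :=
    hgnn.mono fun r hr hrt => hr ⟨hrt.1, hrt.2.trans_lt (htτ'.trans_le hττ')⟩
  have hgx : ∀ᵐ r, r ∈ Ioc 0 t → 0 ≤ g r / x r ^ α := hg.mono fun r hr hrt =>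
    div_nonneg (hr hrt) (Real.rpow_nonneg (hxpos r (hsub (Ioc_subset_Icc_self hrt))).le α)
  have hgint' := fun r hr => hgint r (hsubτ hr)
  have hint' := fun r hr => hint r (hsub hr)
  have key := rpow_neg_mul_lt_add_of_increment_ge (x := x) hα hμ hβ₀.1 ht
    (uIcc_of_le ht ▸ continuousOn_primitive_interval' (hgint' t ⟨ht, le_rfl⟩) left_mem_uIcc)
    (monotoneOn_primitive hgint' hg) integral_same (fun r hr => hG r (hsubτ hr))
    (uIcc_of_le ht ▸ continuousOn_primitive_interval' (hint' t ⟨ht, le_rfl⟩) left_mem_uIcc)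
    (fun r hr => by simpa using monotoneOn_primitive hint' hgx ⟨le_rfl, ht⟩ hr hr.1)
    (fun r hr => by
      rw [heq r (hsub hr), ← sub_eq_rpow_neg_of_root hβ₀.1 hβ₀.2]
      linarith [hfb r (hsubτ hr)])
    fun s hs c hc B _ hxB =>
      have hc' : c ∈ Icc 0 t := ⟨hs.1.trans hc.1, hc.2⟩
      sub_mul_rpow_neg_le_sub_integral_div_rpow hα.le hc.1 (hgint' s hs) (hgint' c hc')
        (hint' s hs) (hint' c hc')
        (hg.mono fun r hr hrsc => hr ⟨hs.1.trans_lt hrsc.1, hrsc.2.trans hc.2⟩) fun r hr =>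
          ⟨hxpos r (hsub ⟨hs.1.trans hr.1.le, hr.2.trans hc.2⟩), hxB r (Ioc_subset_Icc_self hr)⟩
  rw [heq t ⟨ht, htτ'⟩]
  linarith

theorem stmt_18 (α μ τ τ' β β₀ : ℝ) (hα : 0 < α) (hμ : 0 < μ) (hτ : 0 < τ)
    (hτ' : 0 < τ') (hττ' : τ' ≤ τ)
    (g f x G : ℝ → ℝ)
    (hgnn : ∀ᵐ s ∂(volume : Measure ℝ), s ∈ Set.Ioo 0 τ → 0 ≤ g s)
    (hgint : ∀ t ∈ Set.Ico (0:ℝ) τ, IntervalIntegrable g volume 0 t)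
    (hG : ∀ t ∈ Set.Ico (0:ℝ) τ,
      G t = ((α + 1) * ∫ s in (0:ℝ)..t, g s) ^ (1 / (α + 1)))
    (hf : ContinuousOn f (Set.Ico 0 τ))
    (hfb : ∀ t ∈ Set.Ico (0:ℝ) τ, f t ≤ β * G t)
    (hx : ContinuousOn x (Set.Ico 0 τ'))
    (hxpos : ∀ t ∈ Set.Ico (0:ℝ) τ', 0 < x t)
    (hint : ∀ t ∈ Set.Ico (0:ℝ) τ',
      IntervalIntegrable (fun s => g s / x s ^ α) volume 0 t)
    (heq : ∀ t ∈ Set.Ico (0:ℝ) τ',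
      x t = μ + f t + ∫ s in (0:ℝ)..t, g s / x s ^ α)
    (hβ₀ : 0 < β₀ ∧ β₀ ^ (α + 1) - β * β₀ ^ α - 1 = 0) :
    ∀ t ∈ Set.Ico (0:ℝ) τ', f t + β₀ ^ (-α) * G t < x t :=
  stmt_18_general α μ τ τ' β β₀ hα hμ hττ' g f x G hgnn hgint hG hfb hxpos hint heq hβ₀
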